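/- The absolute error loss L(p, p̂) = |p - p̂| on [0,1]² has no linear equivalent: there is no function L̃(p, p̂) affine in p such that |p - p̂| - L̃(p, p̂) is independent of p̂. -/

import Mathlib

/-! If `L̃` were a linear equivalent of `|p - p̂|`, then `|p - 1/2| - |p - 0|`, being equal to
`L̃(p, 1/2) - L̃(p, 0)`, would be affine in `p` on `[0, 1]`; since `|p - 0| = p` there, so would be
`|p - 1/2|`. But `p ↦ |p - c|` has slope `-1` left of `c` and `+1` right of it. -/

open Set

def IsAffineOn (s : Set ℝ) (f : ℝ → ℝ) : Prop :=
  ∃ a b : ℝ, ∀ p ∈ s, f p = a * p + b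

namespace IsAffineOn

variable {s : Set ℝ} {f g : ℝ → ℝ}

lemma add (hf : IsAffineOn s f) (hg : IsAffineOn s g) : IsAffineOn s (f + g) := by
  obtain ⟨a, b, hf⟩ := hf
  obtain ⟨a', b', hg⟩ := hg
  exact ⟨a + a', b + b', fun p hp => by simp only [Pi.add_apply, hf p hp, hg p hp]; ring⟩

lemma sub (hf : IsAffineOn s f) (hg : IsAffineOn s g) : IsAffineOn s (f - g) := by
  obtain ⟨a, b, hf⟩ := hf
  obtain ⟨a', b', hg⟩ := hg
  exact ⟨a - a', b - b', fun p hp => by simp only [Pi.sub_apply, hf p hp, hg p hp]; ring⟩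

lemma congr (hf : IsAffineOn s f) (hfg : EqOn f g s) : IsAffineOn s g := by
  obtain ⟨a, b, hf⟩ := hf
  exact ⟨a, b, fun p hp => hfg hp ▸ hf p hp⟩

lemma id : IsAffineOn s id := ⟨1, 0, fun p _ => by simp⟩

end IsAffineOn

lemma not_isAffineOn_abs_sub {x y c : ℝ} (hxc : x < c) (hcy : c < y) :
    ¬ IsAffineOn (Icc x y) (fun p => |p - c|) := by
  rintro ⟨a, b, h⟩
  have hx : |x - c| = a * x + b := h x ⟨le_rfl, (hxc.trans hcy).le⟩
  have hc : |c - c| = a * c + b := h c ⟨hxc.le, hcy.le⟩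
  have hy : |y - c| = a * y + b := h y ⟨(hxc.trans hcy).le, le_rfl⟩
  rw [abs_of_neg (sub_neg.2 hxc)] at hx
  rw [sub_self, abs_zero] at hc
  rw [abs_of_pos (sub_pos.2 hcy)] at hy
  have left_slope : (a + 1) * (c - x) = 0 := by linarith
  have right_slope : (a - 1) * (y - c) = 0 := by linarith
  have ha₁ : a = -1 := by
    linarith [(mul_eq_zero.1 left_slope).resolve_right (sub_ne_zero.2 hxc.ne')]
  have ha₂ : a = 1 := by
    linarith [(mul_eq_zero.1 right_slope).resolve_right (sub_ne_zero.2 hcy.ne')]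
  linarith

/-- The absolute error loss `L(p,p̂) = |p - p̂|` on `[0,1]²` has no linear
equivalent: there is no `L̃` affine in `p` such that `|p - p̂| - L̃(p,p̂)`
depends only on `p`. -/
theorem stmt3 :
    ¬ ∃ (Lt : ℝ → ℝ → ℝ) (d : ℝ → ℝ),
      (∀ phat ∈ Set.Icc (0:ℝ) 1, ∃ a b : ℝ, ∀ p ∈ Set.Icc (0:ℝ) 1,
        Lt p phat = a * p + b) ∧
      (∀ p ∈ Set.Icc (0:ℝ) 1, ∀ phat ∈ Set.Icc (0:ℝ) 1,
        |p - phat| - Lt p phat = d p) := by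
  rintro ⟨Lt, d, hLt, hd⟩
  have half_mem : (1 / 2 : ℝ) ∈ Icc (0 : ℝ) 1 := by norm_num
  have zero_mem : (0 : ℝ) ∈ Icc (0 : ℝ) 1 := by norm_num
  have abs_sub_half_eq : EqOn ((fun p => Lt p (1 / 2)) - (fun p => Lt p 0) + id)
      (fun p => |p - 1 / 2|) (Icc 0 1) := by
    intro p hp
    have h₀ := hd p hp 0 zero_mem
    have h₁ := hd p hp (1 / 2) half_mem
    rw [sub_zero, abs_of_nonneg hp.1] at h₀
    simp only [Pi.add_apply, Pi.sub_apply, id]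
    linarith
  have hLt₁ : IsAffineOn (Icc 0 1) (fun p => Lt p (1 / 2)) := hLt _ half_mem
  have hLt₀ : IsAffineOn (Icc 0 1) (fun p => Lt p 0) := hLt _ zero_mem
  exact not_isAffineOn_abs_sub (x := 0) (y := 1) (by norm_num) (by norm_num)
    (((hLt₁.sub hLt₀).add IsAffineOn.id).congr abs_sub_half_eq)
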